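/- arXiv:2409.20247 — 3 statements merged into one kernel-verified Lean document; each statement's English description precedes it below -/
import Mathlib

section
/- Let d ≥ 1, k ≥ 1, α ∈ [0,1), L > 0, and let Z be a set. Suppose ℓ : EuclideanSpace ℝ (Fin d) → Z → ℝ is such that for every z ∈ Z the map w ↦ ℓ(w, z) is convex and L-Lipschitz. Fix w⁰ ∈ EuclideanSpace ℝ (Fin d). For a dataset S = (z₁, …, z_k) ∈ Z^k define f_S(w) = (1/k) ∑_{j=1}^k ℓ(w, z_j) + (1−α)‖w − w⁰‖², and let S^i denote the dataset obtained from S by replacing z_i with some z_i' ∈ Z. If w_S is a global minimizer of f_S and w_{S^i} is a global minimizer of f_{S^i}, then for every i ∈ {1, …, k}, |ℓ(w_S, z_i) − ℓ(w_{S^i}, z_i)| ≤ 2L²/((1−α)·k). -/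
theorem stmt0 (d k : ℕ) (hd : 1 ≤ d) (hk : 1 ≤ k) (α L : ℝ)
    (hα0 : 0 ≤ α) (hα1 : α < 1) (hL : 0 < L)
    (Z : Type*) (ℓ : EuclideanSpace ℝ (Fin d) → Z → ℝ)
    (hconv : ∀ z : Z, ConvexOn ℝ Set.univ (fun w => ℓ w z))
    (hlip : ∀ z : Z, LipschitzWith (Real.toNNReal L) (fun w => ℓ w z))
    (w0 : EuclideanSpace ℝ (Fin d))
    (S : Fin k → Z) (i : Fin k) (z' : Z)
    (f : (Fin k → Z) → EuclideanSpace ℝ (Fin d) → ℝ)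
    (hf : ∀ (T : Fin k → Z) (w : EuclideanSpace ℝ (Fin d)),
      f T w = (1 / (k : ℝ)) * ∑ j, ℓ w (T j) + (1 - α) * ‖w - w0‖ ^ 2)
    (wS wSi : EuclideanSpace ℝ (Fin d))
    (hwS : ∀ w, f S wS ≤ f S w)
    (hwSi : ∀ w, f (Function.update S i z') wSi ≤ f (Function.update S i z') w) :
    |ℓ wS (S i) - ℓ wSi (S i)| ≤ 2 * L ^ 2 / ((1 - α) * k) := by
  have hc : (0:ℝ) < 1 - α := by linarith
  have hk0 : (0:ℝ) < (k:ℝ) := by exact_mod_cast Nat.lt_of_lt_of_le Nat.zero_lt_one hk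
  have hK : (0:ℝ) ≤ 1 / (k:ℝ) := by positivity
  -- Lipschitz in real form
  have hlipR : ∀ (z : Z) (a b : EuclideanSpace ℝ (Fin d)),
      |ℓ a z - ℓ b z| ≤ L * ‖a - b‖ := by
    intro z a b
    have h := (hlip z).dist_le_mul a b
    rw [Real.dist_eq, dist_eq_norm] at h
    simpa [Real.coe_toNNReal L hL.le] using h
  -- strong convexity inequality at a minimizer
  have key : ∀ (T : Fin k → Z) (ws w : EuclideanSpace ℝ (Fin d)),
      (∀ v, f T ws ≤ f T v) →
      f T ws + (1 - α) / 2 * ‖w - ws‖ ^ 2 ≤ f T w := by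
    intro T ws w hmin
    set m : EuclideanSpace ℝ (Fin d) := (1/2 : ℝ) • ws + (1/2 : ℝ) • w with hm
    have hmw0 : m - w0 = (1/2 : ℝ) • ((ws - w0) + (w - w0)) := by
      rw [hm]
      module
    have hpar := parallelogram_law_with_norm ℝ (ws - w0) (w - w0)
    have huv : (ws - w0) - (w - w0) = ws - w := by abel
    have hnorm : ‖m - w0‖ ^ 2
        = (1/2) * ‖ws - w0‖ ^ 2 + (1/2) * ‖w - w0‖ ^ 2 - (1/4) * ‖w - ws‖ ^ 2 := by
      rw [hmw0, norm_smul]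
      have h1 : ‖w - ws‖ = ‖(ws - w0) - (w - w0)‖ := by rw [huv, norm_sub_rev]
      rw [h1]
      simp only [Real.norm_eq_abs]
      rw [abs_of_pos (by norm_num : (0:ℝ) < 1/2)]
      nlinarith [hpar]
    have hCsum : ∑ j, ℓ m (T j) ≤ (1/2) * ∑ j, ℓ ws (T j) + (1/2) * ∑ j, ℓ w (T j) := by
      rw [Finset.mul_sum, Finset.mul_sum, ← Finset.sum_add_distrib]
      apply Finset.sum_le_sum
      intro j _
      have := (hconv (T j)).2 (Set.mem_univ ws) (Set.mem_univ w)
        (by norm_num : (0:ℝ) ≤ 1/2) (by norm_num : (0:ℝ) ≤ 1/2) (by norm_num)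
      simpa [hm, smul_eq_mul] using this
    have hCsum' : (1/(k:ℝ)) * ∑ j, ℓ m (T j)
        ≤ (1/(k:ℝ)) * ((1/2) * ∑ j, ℓ ws (T j) + (1/2) * ∑ j, ℓ w (T j)) :=
      mul_le_mul_of_nonneg_left hCsum hK
    have hmin' := hmin m
    rw [hf T ws, hf T m, hnorm] at hmin'
    rw [hf T ws, hf T w]
    nlinarith [hmin', hCsum', hc]
  -- difference of objectives
  have hdiff : ∀ w, f (Function.update S i z') w
      = f S w + (1/(k:ℝ)) * (ℓ w z' - ℓ w (S i)) := by
    intro w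
    rw [hf, hf]
    have h1 : ∑ j, (ℓ w (Function.update S i z' j) - ℓ w (S j)) = ℓ w z' - ℓ w (S i) := by
      rw [Finset.sum_eq_single i]
      · simp
      · intro b _ hb
        rw [Function.update_of_ne hb]
        ring
      · simp
    rw [Finset.sum_sub_distrib] at h1
    have h2 : ∑ j, ℓ w (Function.update S i z' j)
        = ∑ j, ℓ w (S j) + (ℓ w z' - ℓ w (S i)) := by linarith
    rw [h2]
    ring
  set D := ‖wS - wSi‖ with hD
  have hDrev : ‖wSi - wS‖ = D := norm_sub_rev _ _
  have h1 := key S wS wSi hwS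
  have h2 := key (Function.update S i z') wSi wS hwSi
  rw [hDrev] at h1
  rw [hdiff wS, hdiff wSi] at h2
  have hE1 : ℓ wS z' - ℓ wSi z' ≤ L * D := by
    have h := hlipR z' wS wSi
    linarith [(abs_le.mp h).2]
  have hE2 : ℓ wSi (S i) - ℓ wS (S i) ≤ L * D := by
    have h := hlipR (S i) wSi wS
    rw [hDrev] at h
    linarith [(abs_le.mp h).2]
  -- combine: (1-α) * D^2 ≤ 2 L D / k
  have hcomb : (1 - α) * D ^ 2 ≤ (1/(k:ℝ)) * (2 * L * D) := by
    have hX : (ℓ wS z' - ℓ wSi z') + (ℓ wSi (S i) - ℓ wS (S i)) ≤ 2 * L * D := by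
      linarith
    have hX' := mul_le_mul_of_nonneg_left hX hK
    have heq : (1/(k:ℝ)) * (ℓ wS z' - ℓ wS (S i)) - (1/(k:ℝ)) * (ℓ wSi z' - ℓ wSi (S i))
        = (1/(k:ℝ)) * ((ℓ wS z' - ℓ wSi z') + (ℓ wSi (S i) - ℓ wS (S i))) := by ring
    linarith [h1, h2, hX', heq]
  have hDnonneg : 0 ≤ D := norm_nonneg _
  have hDle : D ≤ 2 * L / ((1 - α) * (k:ℝ)) := by
    rcases eq_or_lt_of_le hDnonneg with h0 | h0
    · rw [← h0]; positivity
    · rw [le_div_iff₀ (by positivity : (0:ℝ) < (1 - α) * (k:ℝ))]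
      have h4 := mul_le_mul_of_nonneg_right hcomb hk0.le
      have h5 : (1/(k:ℝ)) * (2*L*D) * (k:ℝ) = 2*L*D := by field_simp
      rw [h5] at h4
      have h6 : (D * ((1 - α) * (k:ℝ))) * D ≤ (2 * L) * D := by linear_combination h4
      exact le_of_mul_le_mul_right h6 h0
  have hfinal := hlipR (S i) wS wSi
  calc |ℓ wS (S i) - ℓ wSi (S i)| ≤ L * D := hfinal
    _ ≤ L * (2 * L / ((1 - α) * (k:ℝ))) :=
        mul_le_mul_of_nonneg_left hDle hL.le
    _ = 2 * L ^ 2 / ((1 - α) * (k:ℝ)) := by ring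
end

section
/- Let d ≥ 1, k ≥ 1, α ∈ [0,1), and let Z be a set. Suppose ℓ : EuclideanSpace ℝ (Fin d) → Z → ℝ is such that for every z ∈ Z the map w ↦ ℓ(w, z) is convex, and let w⁰ ∈ EuclideanSpace ℝ (Fin d). For S = (z₁, …, z_k) ∈ Z^k define f_S(w) = (1/k) ∑_{j=1}^k ℓ(w, z_j) + (1−α)‖w − w⁰‖², and let S^i be S with z_i replaced by z_i'. If w_S is a global minimizer of f_S and w_{S^i} is a global minimizer of f_{S^i}, then (1−α)·‖w_{S^i} − w_S‖² ≤ (ℓ(w_{S^i}, z_i) − ℓ(w_S, z_i))/k + (ℓ(w_S, z_i') − ℓ(w_{S^i}, z_i'))/k. -/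
/-!
Each `f_T` is a convex function plus `(1 - α)‖w - w⁰‖²`, hence `2(1 - α)`-strongly convex.
Comparing a minimizer with the midpoint of the segment to any other point shows that a
`2(1 - α)`-strongly convex function grows at least by `(1 - α)/2 · ‖w - w_min‖²` away from its
minimizer. Adding this growth bound for `f_S` (at `w_{S^i}`) and for `f_{S^i}` (at `w_S`), the
two datasets differ in one sample only, so everything cancels except the four loss values at
`z_i` and `z_i'`.
-/

open Set

lemma convexOn_sum {𝕜 E β ι : Type*} [Semiring 𝕜] [PartialOrder 𝕜] [AddCommMonoid E]
    [SMul 𝕜 E] [AddCommMonoid β] [PartialOrder β] [IsOrderedAddMonoid β] [Module 𝕜 β]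
    {s : Set E} {t : Finset ι} {g : ι → E → β} (hs : Convex 𝕜 s)
    (hg : ∀ i ∈ t, ConvexOn 𝕜 s (g i)) : ConvexOn 𝕜 s (fun x ↦ ∑ i ∈ t, g i x) := by
  simpa only [← Finset.sum_apply] using
    Finset.sum_induction g (ConvexOn 𝕜 s) (fun _ _ ↦ ConvexOn.add) (convexOn_const 0 hs) hg

lemma Fintype.sum_comp_update {ι α M : Type*} [Fintype ι] [DecidableEq ι] [AddCommGroup M]
    (g : α → M) (S : ι → α) (i : ι) (b : α) :
    ∑ j, g (Function.update S i b j) = ∑ j, g (S j) - g (S i) + g b := by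
  simp only [← Function.comp_apply (f := g), Function.comp_update,
    Finset.sum_update_of_mem (Finset.mem_univ i), Finset.sdiff_singleton_eq_erase,
    ← Finset.add_sum_erase _ _ (Finset.mem_univ i)]
  abel

section StrongConvexity

variable {E : Type*} [NormedAddCommGroup E] {s : Set E}

lemma StrongConvexOn.mul_norm_sub_sq_le_of_isMinOn [NormedSpace ℝ E] {f : E → ℝ} {m : ℝ}
    {x y : E} (hf : StrongConvexOn s m f) (hmin : IsMinOn f s x) (hx : x ∈ s) (hy : y ∈ s) :
    m / 4 * ‖y - x‖ ^ 2 ≤ f y - f x := by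
  have h₀ : (0 : ℝ) ≤ 1 / 2 := by norm_num
  have hmid := hf.2 hx hy h₀ h₀ (by norm_num)
  have hle : f x ≤ f _ := hmin (hf.1 hx hy h₀ h₀ (by norm_num))
  simp only [smul_eq_mul] at hmid
  rw [norm_sub_rev] at hmid
  linarith

variable [InnerProductSpace ℝ E]

lemma strongConvexOn_mul_norm_sub_sq (hs : Convex ℝ s) (c : ℝ) (x₀ : E) :
    StrongConvexOn s (2 * c) (fun x ↦ c * ‖x - x₀‖ ^ 2) := by
  have affine : (fun x ↦ c * ‖x - x₀‖ ^ 2 - 2 * c / 2 * ‖x‖ ^ 2)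
      = fun x ↦ c * ‖x₀‖ ^ 2 + (-(2 * c) • innerₛₗ ℝ x₀) x := by
    ext x
    simp only [LinearMap.smul_apply, innerₛₗ_apply_apply, smul_eq_mul, norm_sub_sq_real,
      real_inner_comm x₀ x]
    ring
  rw [strongConvexOn_iff_convex, affine]
  exact (convexOn_const _ hs).add ((-(2 * c) • innerₛₗ ℝ x₀).convexOn hs)

lemma ConvexOn.strongConvexOn_add_mul_norm_sub_sq {g : E → ℝ} (hg : ConvexOn ℝ s g) (c : ℝ)
    (x₀ : E) : StrongConvexOn s (2 * c) (fun x ↦ g x + c * ‖x - x₀‖ ^ 2) := by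
  have h := (uniformConvexOn_zero.2 hg).add (strongConvexOn_mul_norm_sub_sq hg.1 c x₀)
  rwa [zero_add] at h

end StrongConvexity

theorem stmt3_general (d k : ℕ) (α : ℝ)
    (Z : Type*) (ℓ : EuclideanSpace ℝ (Fin d) → Z → ℝ)
    (hconv : ∀ z : Z, ConvexOn ℝ Set.univ (fun w => ℓ w z))
    (w0 : EuclideanSpace ℝ (Fin d))
    (S : Fin k → Z) (i : Fin k) (z' : Z)
    (f : (Fin k → Z) → EuclideanSpace ℝ (Fin d) → ℝ)
    (hf : ∀ (T : Fin k → Z) (w : EuclideanSpace ℝ (Fin d)),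
      f T w = (1 / (k : ℝ)) * ∑ j, ℓ w (T j) + (1 - α) * ‖w - w0‖ ^ 2)
    (wS wSi : EuclideanSpace ℝ (Fin d))
    (hwS : ∀ w, f S wS ≤ f S w)
    (hwSi : ∀ w, f (Function.update S i z') wSi ≤ f (Function.update S i z') w) :
    (1 - α) * ‖wSi - wS‖ ^ 2 ≤
      (ℓ wSi (S i) - ℓ wS (S i)) / k + (ℓ wS z' - ℓ wSi z') / k := by
  have hstrong (T : Fin k → Z) : StrongConvexOn univ (2 * (1 - α)) (f T) := by
    rw [show f T = _ from funext (hf T)]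
    exact ((convexOn_sum convex_univ fun j _ ↦ hconv (T j)).smul
      (by positivity)).strongConvexOn_add_mul_norm_sub_sq (1 - α) w0
  have hgrowth := (hstrong S).mul_norm_sub_sq_le_of_isMinOn (isMinOn_univ_iff.2 hwS)
    (mem_univ wS) (mem_univ wSi)
  have hgrowth' := (hstrong _).mul_norm_sub_sq_le_of_isMinOn (isMinOn_univ_iff.2 hwSi)
    (mem_univ wSi) (mem_univ wS)
  have hswap (w) : f (Function.update S i z') w = f S w + (ℓ w z' - ℓ w (S i)) / k := by
    rw [hf, hf, Fintype.sum_comp_update]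
    ring
  rw [hswap, hswap, norm_sub_rev] at hgrowth'
  linear_combination hgrowth + hgrowth'

theorem stmt3 (d k : ℕ) (hd : 1 ≤ d) (hk : 1 ≤ k) (α : ℝ)
    (hα0 : 0 ≤ α) (hα1 : α < 1)
    (Z : Type*) (ℓ : EuclideanSpace ℝ (Fin d) → Z → ℝ)
    (hconv : ∀ z : Z, ConvexOn ℝ Set.univ (fun w => ℓ w z))
    (w0 : EuclideanSpace ℝ (Fin d))
    (S : Fin k → Z) (i : Fin k) (z' : Z)
    (f : (Fin k → Z) → EuclideanSpace ℝ (Fin d) → ℝ)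
    (hf : ∀ (T : Fin k → Z) (w : EuclideanSpace ℝ (Fin d)),
      f T w = (1 / (k : ℝ)) * ∑ j, ℓ w (T j) + (1 - α) * ‖w - w0‖ ^ 2)
    (wS wSi : EuclideanSpace ℝ (Fin d))
    (hwS : ∀ w, f S wS ≤ f S w)
    (hwSi : ∀ w, f (Function.update S i z') wSi ≤ f (Function.update S i z') w) :
    (1 - α) * ‖wSi - wS‖ ^ 2 ≤
      (ℓ wSi (S i) - ℓ wS (S i)) / k + (ℓ wS z' - ℓ wSi z') / k :=
  stmt3_general d k α Z ℓ hconv w0 S i z' f hf wS wSi hwS hwSi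
end

section
/- Let d ≥ 1, k ≥ 1, α ∈ [0,1), L > 0, and let Z be a set. Suppose ℓ : EuclideanSpace ℝ (Fin d) → Z → ℝ is such that for every z ∈ Z the map w ↦ ℓ(w, z) is convex and L-Lipschitz, and let w⁰ ∈ EuclideanSpace ℝ (Fin d). For S = (z₁, …, z_k) ∈ Z^k define f_S(w) = (1/k) ∑_{j=1}^k ℓ(w, z_j) + (1−α)‖w − w⁰‖², and let S^i be S with z_i replaced by z_i'. If w_S is a global minimizer of f_S and w_{S^i} is a global minimizer of f_{S^i}, then ‖w_{S^i} − w_S‖ ≤ 2L/((1−α)·k). -/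
-- growth lemma: minimizer of convex g + μ‖·−w0‖² has quadratic growth
lemma growth_aux {E : Type*} [NormedAddCommGroup E] [InnerProductSpace ℝ E]
    (μ : ℝ) (hμ : 0 ≤ μ) (g : E → ℝ)
    (hg : ∀ a b : E, g ((1/2 : ℝ) • a + (1/2 : ℝ) • b) ≤ (1/2) * g a + (1/2) * g b)
    (w0 a : E)
    (hmin : ∀ w, g a + μ * ‖a - w0‖ ^ 2 ≤ g w + μ * ‖w - w0‖ ^ 2) :
    ∀ w, g a + μ * ‖a - w0‖ ^ 2 + (μ/2) * ‖w - a‖ ^ 2 ≤ g w + μ * ‖w - w0‖ ^ 2 := by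
  intro w
  set m : E := (1/2 : ℝ) • a + (1/2 : ℝ) • w with hm
  have hgm : g m ≤ (1/2) * g a + (1/2) * g w := hg a w
  have hq : ‖m - w0‖ ^ 2 = (1/2) * ‖a - w0‖ ^ 2 + (1/2) * ‖w - w0‖ ^ 2
      - (1/4) * ‖w - a‖ ^ 2 := by
    have hpar := parallelogram_law_with_norm ℝ (a - w0) (w - w0)
    have h1 : m - w0 = (1/2 : ℝ) • ((a - w0) + (w - w0)) := by
      rw [hm]; module
    have h2 : ‖m - w0‖ ^ 2 = (1/4) * ‖(a - w0) + (w - w0)‖ ^ 2 := by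
      rw [h1, norm_smul]; rw [mul_pow]; norm_num
    have h3 : (a - w0) - (w - w0) = a - w := by abel
    have h4 : ‖w - a‖ = ‖a - w‖ := norm_sub_rev _ _
    rw [h2, h4, ← h3]
    nlinarith [hpar, sq_nonneg ‖(a-w0)+(w-w0)‖]
  have hmm := hmin m
  nlinarith [hgm, hq, hmm]

theorem stmt4 (d k : ℕ) (hd : 1 ≤ d) (hk : 1 ≤ k) (α L : ℝ)
    (hα0 : 0 ≤ α) (hα1 : α < 1) (hL : 0 < L)
    (Z : Type*) (ℓ : EuclideanSpace ℝ (Fin d) → Z → ℝ)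
    (hconv : ∀ z : Z, ConvexOn ℝ Set.univ (fun w => ℓ w z))
    (hlip : ∀ z : Z, LipschitzWith (Real.toNNReal L) (fun w => ℓ w z))
    (w0 : EuclideanSpace ℝ (Fin d))
    (S : Fin k → Z) (i : Fin k) (z' : Z)
    (f : (Fin k → Z) → EuclideanSpace ℝ (Fin d) → ℝ)
    (hf : ∀ (T : Fin k → Z) (w : EuclideanSpace ℝ (Fin d)),
      f T w = (1 / (k : ℝ)) * ∑ j, ℓ w (T j) + (1 - α) * ‖w - w0‖ ^ 2)
    (wS wSi : EuclideanSpace ℝ (Fin d))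
    (hwS : ∀ w, f S wS ≤ f S w)
    (hwSi : ∀ w, f (Function.update S i z') wSi ≤ f (Function.update S i z') w) :
    ‖wSi - wS‖ ≤ 2 * L / ((1 - α) * k) := by
  set μ := 1 - α with hμdef
  have hμ : 0 < μ := by simp [hμdef]; linarith
  have hk0 : (0 : ℝ) < k := by exact_mod_cast hk
  set D := ‖wSi - wS‖ with hD
  -- midpoint convexity of the empirical part
  have hgmid : ∀ (T : Fin k → Z) (a b : EuclideanSpace ℝ (Fin d)),
      (1/(k:ℝ)) * ∑ j, ℓ ((1/2 : ℝ) • a + (1/2 : ℝ) • b) (T j)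
        ≤ (1/2) * ((1/(k:ℝ)) * ∑ j, ℓ a (T j)) + (1/2) * ((1/(k:ℝ)) * ∑ j, ℓ b (T j)) := by
    intro T a b
    have hsum : ∑ j, ℓ ((1/2 : ℝ) • a + (1/2 : ℝ) • b) (T j)
        ≤ ∑ j, ((1/2) * ℓ a (T j) + (1/2) * ℓ b (T j)) := by
      apply Finset.sum_le_sum
      intro j _
      have := (hconv (T j)).2 (Set.mem_univ a) (Set.mem_univ b)
        (by norm_num : (0:ℝ) ≤ 1/2) (by norm_num : (0:ℝ) ≤ 1/2) (by norm_num)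
      simpa using this
    rw [Finset.sum_add_distrib, ← Finset.mul_sum, ← Finset.mul_sum] at hsum
    have h1k : (0:ℝ) ≤ 1/(k:ℝ) := by positivity
    nlinarith [mul_le_mul_of_nonneg_left hsum h1k]
  -- growth inequalities
  have hgrowS := growth_aux μ hμ.le (fun w => (1/(k:ℝ)) * ∑ j, ℓ w (S j))
    (hgmid S) w0 wS (fun w => by have := hwS w; rw [hf, hf] at this; linarith) wSi
  have hgrowSi := growth_aux μ hμ.le (fun w => (1/(k:ℝ)) * ∑ j, ℓ w (Function.update S i z' j))
    (hgmid (Function.update S i z')) w0 wSi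
    (fun w => by have := hwSi w; rw [hf, hf] at this; linarith) wS
  -- sum difference: only index i differs
  have hdiff : ((1/(k:ℝ)) * ∑ j, ℓ wSi (S j) + (1/(k:ℝ)) * ∑ j, ℓ wS (Function.update S i z' j))
      - ((1/(k:ℝ)) * ∑ j, ℓ wS (S j) + (1/(k:ℝ)) * ∑ j, ℓ wSi (Function.update S i z' j))
      = (1/(k:ℝ)) * ((ℓ wSi (S i) - ℓ wS (S i)) + (ℓ wS z' - ℓ wSi z')) := by
    have e1 : ∑ j, ℓ wSi (S j) - ∑ j, ℓ wSi (Function.update S i z' j)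
        = ℓ wSi (S i) - ℓ wSi z' := by
      rw [← Finset.sum_sub_distrib]
      rw [Finset.sum_eq_single i]
      · simp [Function.update_self]
      · intro j _ hj; simp [Function.update_of_ne hj]
      · simp
    have e2 : ∑ j, ℓ wS (Function.update S i z' j) - ∑ j, ℓ wS (S j)
        = ℓ wS z' - ℓ wS (S i) := by
      rw [← Finset.sum_sub_distrib]
      rw [Finset.sum_eq_single i]
      · simp [Function.update_self]
      · intro j _ hj; simp [Function.update_of_ne hj]
      · simp
    have := e1
    field_simp
    linarith [e1, e2]
  -- Lipschitz bounds
  have hlipR : ∀ z : Z, ∀ a b : EuclideanSpace ℝ (Fin d), |ℓ a z - ℓ b z| ≤ L * ‖a - b‖ := by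
    intro z a b
    have := (hlip z).dist_le_mul a b
    rw [Real.dist_eq, dist_eq_norm] at this
    calc |ℓ a z - ℓ b z| ≤ (Real.toNNReal L : ℝ) * ‖a - b‖ := this
    _ = L * ‖a - b‖ := by rw [Real.coe_toNNReal _ hL.le]
  have hb1 := (abs_le.mp (hlipR (S i) wSi wS)).2
  have hb2 := (abs_le.mp (hlipR z' wS wSi)).2
  have hDrev : ‖wS - wSi‖ = D := norm_sub_rev _ _
  -- combine
  have hkey : μ * D ^ 2 ≤ (1/(k:ℝ)) * (2 * L * D) := by
    have hsum := add_le_add hgrowS hgrowSi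
    have hb : (1/(k:ℝ)) * ((ℓ wSi (S i) - ℓ wS (S i)) + (ℓ wS z' - ℓ wSi z'))
        ≤ (1/(k:ℝ)) * (2 * L * D) := by
      apply mul_le_mul_of_nonneg_left _ (by positivity)
      rw [hD]
      nlinarith [hb1, hb2, hDrev]
    have hDrev2 : ‖wS - wSi‖ ^ 2 = D ^ 2 := by rw [hDrev]
    nlinarith [hsum, hdiff, hb]
  rcases eq_or_lt_of_le (norm_nonneg (wSi - wS)) with h0 | h0
  · rw [hD, ← h0]
    exact div_nonneg (by positivity) (mul_nonneg hμ.le hk0.le)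
  · have h0' : 0 < D := by rw [hD]; exact h0
    have hfin : μ * D ≤ 2 * L / (k:ℝ) := by
      have h2 : μ * D * D ≤ (2*L/(k:ℝ)) * D := by
        calc μ * D * D = μ * (D * D) := by ring
        _ ≤ (1/(k:ℝ)) * (2*L*D) := by rw [pow_two] at hkey; linarith [hkey]
        _ = (2*L/(k:ℝ)) * D := by ring
      exact le_of_mul_le_mul_right h2 h0'
    rw [show (2:ℝ)*L/(μ*k) = (2*L/(k:ℝ))/μ by rw [div_div]; ring]
    rw [le_div_iff₀ hμ, mul_comm]
    exact hfin
end
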